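/- arXiv:2407.14809 — 2 statements merged into one kernel-verified Lean document; each statement's English description precedes it below -/
import Mathlib

section
/- Let λ ∈ ℂ ∪ {∞}. Define derivations d_Ab and d_λ^A of W_A(λ) by: d_Ab(L_n) = 0, d_Ab(A_n) = A_n for all n; and, if λ ≠ 0, d_λ^A(L_n) = n·A_n, d_λ^A(A_n) = 0, while if λ = 0, d_0^A(L_n) = n²·A_n, d_0^A(A_n) = 0. Then the space of derivations of W_A(λ) is the internal direct sum Der(W_A(λ)) = Inn(W_A(λ)) ⊕ ℂ·d_Ab ⊕ ℂ·d_λ^A, where Inn(W_A(λ)) denotes the space of inner derivations ad_x, x ∈ W_A(λ). Consequently, the quotient Der(W_A(λ))/Inn(W_A(λ)) is two-dimensional. -/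
/-!
A derivation `D` is first corrected by an inner derivation so that it kills `L₀`: by the Leibniz
rule the degree-zero coefficients of `D L₀` vanish, so `D L₀` lies in the image of `ad L₀`, which
acts on `L_n` and `A_n` as multiplication by `n`. A derivation killing `L₀` commutes with `ad L₀`,
hence preserves degrees, and is described by its diagonal coefficients. Reading the Leibniz rule
on pairs of basis vectors, the `L_n → L_n` coefficient is linear in `n`, the `A_n → L_n`
coefficient vanishes, the `A_n → A_n` coefficient is affine with the same slope, and the
`L_n → A_n` coefficient is `p n + q n²`. Such sequences are exactly the combinations of the
coefficients of `ad A₀` and of `d_λ^A`, so `D ∈ Inn + ℂ d_Ab + ℂ d_λ^A`. Conversely, evaluating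
`ad x = a d_Ab + c d_λ^A` at `A₀` and at the `L_m` forces `a = c = 0`.
-/

/-- The coefficient `n(n+1)λ`, where `λ = ∞` (encoded by `none`) gives `n²`. -/
def lamTerm (lam : Option ℂ) (n : ℤ) : ℂ :=
  match lam with
  | some l => (n : ℂ) * ((n : ℂ) + 1) * l
  | none => (n : ℂ) ^ 2

/-- The submodule of inner derivations `ad_x : y ↦ ⁅x, y⁆` inside the module of all
derivations of a complex Lie algebra. -/
noncomputable def innerDerivations (L : Type) [LieRing L] [LieAlgebra ℂ L] :
    Submodule ℂ (LieDerivation ℂ L L) where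
  carrier := {D | ∃ x : L, ∀ y : L, D y = ⁅x, y⁆}
  add_mem' := by
    rintro D₁ D₂ ⟨x₁, h₁⟩ ⟨x₂, h₂⟩
    exact ⟨x₁ + x₂, fun y => by
      simp [LieDerivation.add_apply, h₁ y, h₂ y, add_lie]⟩
  zero_mem' := ⟨0, fun y => by simp⟩
  smul_mem' := by
    rintro c D ⟨x, h⟩
    exact ⟨c • x, fun y => by simp [LieDerivation.smul_apply, h y, smul_lie]⟩

section BasisMod

variable {K V : Type*} [Field K] [AddCommGroup V] [Module K V] {I : Submodule K V} {u v : V}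
  (hspan : ∀ w, ∃ a c : K, w - (a • u + c • v) ∈ I)
  (hind : ∀ a c : K, a • u + c • v ∈ I → a = 0 ∧ c = 0)

include hspan hind in
theorem isInternal_of_basis_mod :
    DirectSum.IsInternal ![I, K ∙ u, K ∙ v] := by
  have hzero : ∀ (w : V) (a c : K), w ∈ I → w + (a • u + c • v) = 0 → w = 0 ∧ a = 0 ∧ c = 0 := by
    intro w a c hw h
    obtain ⟨rfl, rfl⟩ := hind a c (eq_neg_of_add_eq_zero_right h ▸ I.neg_mem hw)
    simpa using h
  refine (DirectSum.isInternal_submodule_iff_iSupIndep_and_iSup_eq_top _).mpr ⟨?_, ?_⟩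
  · rw [iSupIndep_iff_supIndep_univ, Finset.supIndep_iff_disjoint_erase]
    intro i _
    simp only [Submodule.disjoint_def]
    fin_cases i <;> simp [Fin.univ_succ, Finset.erase_insert_of_ne, Finset.erase_insert_eq_erase,
      Submodule.mem_sup, Submodule.mem_span_singleton]
    · intro x hx a c h
      exact neg_eq_zero.mp (hzero (-x) a c (I.neg_mem hx) (by rw [h]; abel)).1
    · intro a x hx c h
      exact Or.inl (neg_eq_zero.mp
        (hzero x (-a) c hx (by linear_combination (norm := module) h)).2.1)
    · intro a x hx c h
      exact Or.inl (neg_eq_zero.mp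
        (hzero x c (-a) hx (by linear_combination (norm := module) h)).2.2)
  · refine eq_top_iff.mpr fun w _ => ?_
    obtain ⟨a, c, h⟩ := hspan w
    rw [← sub_add_cancel w (a • u + c • v)]
    exact add_mem (Submodule.mem_iSup_of_mem 0 h) (add_mem
      (Submodule.mem_iSup_of_mem 1 (Submodule.smul_mem _ a (Submodule.mem_span_singleton_self u)))
      (Submodule.mem_iSup_of_mem 2 (Submodule.smul_mem _ c (Submodule.mem_span_singleton_self v))))

include hspan hind in
theorem finrank_quotient_eq_two_of_basis_mod :
    Module.finrank K (V ⧸ I) = 2 := by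
  have hli : LinearIndependent K ![I.mkQ u, I.mkQ v] := by
    refine LinearIndependent.pair_iff.mpr fun a c h => hind a c ?_
    rwa [← map_smul, ← map_smul, ← map_add, Submodule.mkQ_apply,
      Submodule.Quotient.mk_eq_zero] at h
  have hsp : ⊤ ≤ Submodule.span K (Set.range ![I.mkQ u, I.mkQ v]) := by
    rintro w -
    obtain ⟨w, rfl⟩ := I.mkQ_surjective w
    obtain ⟨a, c, h⟩ := hspan w
    rw [Matrix.range_cons_cons_empty, Submodule.mem_span_pair]
    refine ⟨a, c, ?_⟩
    rw [← map_smul, ← map_smul, ← map_add, eq_comm, ← sub_eq_zero, ← map_sub]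
    exact (Submodule.Quotient.mk_eq_zero I).mpr h
  simpa using Module.finrank_eq_card_basis (Module.Basis.mk hli hsp)

end BasisMod

theorem lamTerm_zero (lam : Option ℂ) : lamTerm lam 0 = 0 := by
  cases lam <;> simp [lamTerm]

theorem exists_ne_zero_add_lamTerm_ne_zero (lam : Option ℂ) :
    ∃ k : ℤ, k ≠ 0 ∧ (k : ℂ) + lamTerm lam k ≠ 0 := by
  rcases lam with _ | l
  · exact ⟨1, one_ne_zero, by norm_num [lamTerm]⟩
  by_cases hl : 1 + 2 * l = 0
  · refine ⟨2, two_ne_zero, fun h => one_ne_zero (?_ : (1 : ℂ) = 0)⟩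
    norm_num [lamTerm] at h
    linear_combination 3 * hl - h
  · exact ⟨1, one_ne_zero, by convert hl using 1; norm_num [lamTerm]⟩

-- `d_λ^A (L_n) = outerCoeff lam n • A_n`
noncomputable def outerCoeff (lam : Option ℂ) (n : ℤ) : ℂ :=
  if lam = some 0 then (n : ℂ) ^ 2 else n

/- `n + lamTerm lam n` is the coefficient of `A_n` in `⁅L_n, A₀⁆`. The next two lemmas say that
this sequence and `outerCoeff lam` form a basis of the sequences `p n + q n²`. -/
theorem eq_zero_of_mul_add_lamTerm_eq (lam : Option ℂ) {β c : ℂ}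
    (h : ∀ m : ℤ, β * (m + lamTerm lam m) = c * outerCoeff lam m) : c = 0 := by
  have h₁ := h 1
  have h₂ := h (-1)
  rcases lam with _ | l
  · simp [lamTerm, outerCoeff] at h₁ h₂
    exact h₂
  by_cases hl : l = 0
  · subst hl
    norm_num [lamTerm, outerCoeff] at h₁ h₂
    linear_combination -(h₁ + h₂) / 2
  · norm_num [lamTerm, outerCoeff, hl] at h₁ h₂
    have hβ : β = 0 := by
      have : 2 * l * β = 0 := by linear_combination h₁ - h₂
      simpa [hl] using this
    linear_combination hβ - h₂

theorem exists_eq_mul_add_lamTerm_add_outerCoeff (lam : Option ℂ) (p q : ℂ) :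
    ∃ t s : ℂ, ∀ n : ℤ, p * n + q * n ^ 2 = t * (n + lamTerm lam n) + s * outerCoeff lam n := by
  rcases lam with _ | l
  · exact ⟨q, p - q, fun n => by simp [lamTerm, outerCoeff]; ring⟩
  by_cases hl : l = 0
  · subst hl
    exact ⟨p, q, fun n => by simp [lamTerm, outerCoeff]⟩
  · refine ⟨q / l, p - q * (1 + l) / l, fun n => ?_⟩
    simp only [lamTerm, outerCoeff, Option.some.injEq, hl, if_false]
    field_simp
    ring

theorem eq_mul_of_add_eq_add_of_ne (c : ℤ → ℂ) (h : ∀ n m : ℤ, n ≠ m → c (n + m) = c n + c m) :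
    ∀ n : ℤ, c n = n * c 1 := by
  have h₀ : c 0 = 0 := by simpa using h 0 1 (by decide)
  -- `c 5` computed as `c 1 + c 4` and as `c 2 + c 3` pins down `c 2`
  have h₂ : c 2 = 2 * c 1 := by
    have h₃ := h 1 2 (by decide)
    have h₄ := h 1 3 (by decide)
    have h₅ := h 1 4 (by decide)
    have h₅' := h 2 3 (by decide)
    norm_num at h₃ h₄ h₅ h₅'
    linear_combination h₅ - h₅' + h₄
  have hnat : ∀ k : ℕ, c k = k * c 1 := by
    intro k
    induction k with
    | zero => simpa using h₀
    | succ k ih =>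
      by_cases hk : k = 1
      · subst hk; norm_num [h₂]
      · rw [Nat.cast_succ, h k 1 (by exact_mod_cast hk), ih]; push_cast; ring
  intro n
  obtain ⟨k, rfl | rfl⟩ := Int.eq_nat_or_neg n
  · exact hnat k
  · rcases eq_or_ne k 0 with rfl | hk
    · simpa using h₀
    · have := h k (-k) (by omega)
      rw [add_neg_cancel, h₀, hnat k] at this
      push_cast
      linear_combination -this

theorem eq_zero_of_sub_mul_eq_add_mul_sub (e : ℤ → ℂ) (h₁ : e 1 = 0) (h₂ : e 2 = 0)
    (h : ∀ n m : ℤ, ((m : ℂ) - n) * e (n + m) = (n + m) * (e m - e n)) :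
    ∀ n : ℤ, e n = 0 := by
  have h₀ : e 0 = 0 := by simpa [h₁] using h 0 1
  have hpos : ∀ k : ℕ, e (k + 2) = 0 := by
    intro k
    induction k with
    | zero => simpa using h₂
    | succ k ih =>
      have := h 1 (k + 2)
      rw [ih, h₁, show (1 : ℤ) + (k + 2) = (k + 1 : ℕ) + 2 by push_cast; ring] at this
      have hk : ((k : ℂ) + 1) ≠ 0 := by exact_mod_cast Nat.succ_ne_zero k
      push_cast at this ⊢
      exact (mul_eq_zero.mp (by linear_combination this)).resolve_left hk
  have hneg : ∀ k : ℕ, e (-(k + 1)) = 0 := by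
    intro k
    induction k with
    | zero =>
      have := h (-1) 2
      norm_num [h₁, h₂] at this
      simpa using this
    | succ k ih =>
      have := h (-(k + 2)) 1
      rw [h₁, show -((k : ℤ) + 2) + 1 = -(k + 1) by ring, ih] at this
      have hk : ((k : ℂ) + 1) ≠ 0 := by exact_mod_cast Nat.succ_ne_zero k
      push_cast at this ⊢
      rw [show -((k : ℤ) + 1 + 1) = -(k + 2) by ring]
      exact (mul_eq_zero.mp (by linear_combination -this)).resolve_left hk
  intro n
  obtain ⟨k, rfl | rfl⟩ := Int.eq_nat_or_neg n
  · match k with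
    | 0 => exact h₀
    | 1 => exact h₁
    | k + 2 => exact_mod_cast hpos k
  · match k with
    | 0 => exact h₀
    | k + 1 => exact_mod_cast hneg k

theorem exists_eq_mul_add_mul_sq_of_sub_mul_eq (e : ℤ → ℂ)
    (h : ∀ n m : ℤ, ((m : ℂ) - n) * e (n + m) = (n + m) * (e m - e n)) :
    ∃ p q : ℂ, ∀ n : ℤ, e n = p * n + q * n ^ 2 := by
  set p := 2 * e 1 - e 2 / 2
  set q := e 2 / 2 - e 1
  refine ⟨p, q, fun n => sub_eq_zero.mp ?_⟩
  refine eq_zero_of_sub_mul_eq_add_mul_sub (fun k => e k - (p * k + q * k ^ 2)) ?_ ?_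
    (fun n m => ?_) n
  · norm_num [p, q]; ring
  · norm_num [p, q]; ring
  · push_cast
    linear_combination h n m

theorem Module.Basis.repr_lie_eq_mul {ι R L : Type*} [CommRing R] [LieRing L] [LieAlgebra R L]
    (b : Module.Basis ι R L) {y : L} {j k : ι} {r : R} (hj : b.repr ⁅b j, y⁆ k = r)
    (hne : ∀ i, i ≠ j → b.repr ⁅b i, y⁆ k = 0) (x : L) :
    b.repr ⁅x, y⁆ k = r * b.repr x j := by
  conv_lhs => rw [← b.linearCombination_repr x, Finsupp.linearCombination_apply, Finsupp.sum]
  simp only [sum_lie, smul_lie, map_sum, map_smul, Finsupp.coe_finsetSum, Finset.sum_apply,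
    Finsupp.smul_apply, smul_eq_mul]
  rw [Finset.sum_eq_single j (fun i _ hi => by rw [hne i hi, mul_zero])
    (fun h => by rw [Finsupp.notMem_support_iff.mp h, zero_mul]), hj, mul_comm]

section WA

open Sum

def degree : ℤ ⊕ ℤ → ℤ := Sum.elim id id

section

variable {L : Type} [LieRing L] [LieAlgebra ℂ L]

theorem Module.Basis.eq_smul_inl_add_smul_inr (b : Module.Basis (ℤ ⊕ ℤ) ℂ L) (y : L) (n : ℤ)
    (hy : ∀ j, degree j ≠ n → b.repr y j = 0) :
    y = b.repr y (inl n) • b (inl n) + b.repr y (inr n) • b (inr n) := by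
  refine b.repr.injective (Finsupp.ext fun j => ?_)
  rcases j with k | k <;> rcases eq_or_ne k n with rfl | hk
  · simp
  · simpa [Ne.symm hk] using hy (inl k) hk
  · simp
  · simpa [Ne.symm hk] using hy (inr k) hk

theorem mem_innerDerivations_of_basis {ι : Type*} (b : Module.Basis ι ℂ L)
    {D : LieDerivation ℂ L L} {x : L} (h : ∀ i, D (b i) = ⁅x, b i⁆) :
    D ∈ innerDerivations L := by
  have : (D : L →ₗ[ℂ] L) = LieAlgebra.ad ℂ L x := b.ext fun i => by simpa using h i
  exact ⟨x, fun y => by simpa using LinearMap.congr_fun this y⟩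

theorem ad_mem_innerDerivations (x : L) : LieDerivation.ad ℂ L x ∈ innerDerivations L :=
  ⟨x, fun y => by simp⟩

end

/-- `b (inl n)` is `L_n` and `b (inr n)` is `A_n`. -/
structure IsWABasis (lam : Option ℂ) {L : Type} [LieRing L] [LieAlgebra ℂ L]
    (b : Module.Basis (ℤ ⊕ ℤ) ℂ L) : Prop where
  lie_inl_inl : ∀ n m : ℤ, ⁅b (inl n), b (inl m)⁆ = ((m : ℂ) - n) • b (inl (n + m))
  lie_inl_inr : ∀ n m : ℤ, ⁅b (inl n), b (inr m)⁆ =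
    ((n : ℂ) + m + if m = 0 then lamTerm lam n else 0) • b (inr (n + m))
  lie_inr_inr : ∀ n m : ℤ, ⁅b (inr n), b (inr m)⁆ = 0

namespace IsWABasis

variable {lam : Option ℂ} {L : Type} [LieRing L] [LieAlgebra ℂ L]
  {b : Module.Basis (ℤ ⊕ ℤ) ℂ L} (hb : IsWABasis lam b)
include hb

theorem lie_inr_inl (n m : ℤ) : ⁅b (inr n), b (inl m)⁆ =
    -(((m : ℂ) + n + if n = 0 then lamTerm lam m else 0) • b (inr (m + n))) := by
  rw [← lie_skew, hb.lie_inl_inr]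

theorem repr_lie_inl_inl (x : L) (m k : ℤ) :
    b.repr ⁅x, b (inl m)⁆ (inl k) = (2 * m - k) * b.repr x (inl (k - m)) := by
  refine b.repr_lie_eq_mul ?_ (fun i hi => ?_) x
  · simp [hb.lie_inl_inl]; ring
  · rcases i with n | n
    · have : n + m ≠ k := by simp at hi; omega
      simp [hb.lie_inl_inl, this]
    · simp [hb.lie_inr_inl]

theorem repr_lie_inl_inr (x : L) (m k : ℤ) :
    b.repr ⁅x, b (inl m)⁆ (inr k) =
      -((k : ℂ) + if k = m then lamTerm lam m else 0) * b.repr x (inr (k - m)) := by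
  refine b.repr_lie_eq_mul ?_ (fun i hi => ?_) x
  · simp [hb.lie_inr_inl, sub_eq_zero]
  · rcases i with n | n
    · simp [hb.lie_inl_inl]
    · have : m + n ≠ k := by simp at hi; omega
      simp [hb.lie_inr_inl, this]

theorem repr_lie_inr_inl (x : L) (m k : ℤ) : b.repr ⁅x, b (inr m)⁆ (inl k) = 0 := by
  simpa using b.repr_lie_eq_mul (j := inl 0) (r := 0) (by simp [hb.lie_inl_inr])
    (fun i _ => by rcases i with n | n <;> simp [hb.lie_inl_inr, hb.lie_inr_inr]) x

theorem repr_lie_inr_inr (x : L) (m k : ℤ) :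
    b.repr ⁅x, b (inr m)⁆ (inr k) =
      ((k : ℂ) + if m = 0 then lamTerm lam (k - m) else 0) * b.repr x (inl (k - m)) := by
  refine b.repr_lie_eq_mul ?_ (fun i hi => ?_) x
  · simp [hb.lie_inl_inr]
  · rcases i with n | n
    · have : n + m ≠ k := by simp at hi; omega
      simp [hb.lie_inl_inr, this]
    · simp [hb.lie_inr_inr]

theorem lie_inl_zero (i : ℤ ⊕ ℤ) : ⁅b (inl 0), b i⁆ = (degree i : ℂ) • b i := by
  rcases i with n | n <;> simp [hb.lie_inl_inl, hb.lie_inl_inr, lamTerm_zero, degree]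

theorem repr_lie_inl_zero (x : L) (j : ℤ ⊕ ℤ) :
    b.repr ⁅x, b (inl 0)⁆ j = -(degree j : ℂ) * b.repr x j := by
  rcases j with k | k <;> simp [hb.repr_lie_inl_inl, hb.repr_lie_inl_inr, lamTerm_zero, degree]

theorem exists_lie_inl_zero_eq (y : L) (hy : ∀ j, degree j = 0 → b.repr y j = 0) :
    ∃ x : L, ⁅x, b (inl 0)⁆ = y := by
  -- in degree `0` the factor `(degree j)⁻¹` is the junk value `0`, harmless by `hy`
  let c : ℤ ⊕ ℤ →₀ ℂ := Finsupp.ofSupportFinite (fun j => -(degree j : ℂ)⁻¹ * b.repr y j)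
    ((b.repr y).hasFiniteSupport.subset fun j hj h => hj (by simp [h]))
  refine ⟨b.repr.symm c, b.repr.injective (Finsupp.ext fun j => ?_)⟩
  rw [hb.repr_lie_inl_zero, LinearEquiv.apply_symm_apply, Finsupp.ofSupportFinite_coe]
  by_cases hj : degree j = 0
  · simp [hj, hy j hj]
  · field_simp [show (degree j : ℂ) ≠ 0 by exact_mod_cast hj]

section Leibniz

variable (D : LieDerivation ℂ L L) (n m : ℤ)

theorem leibniz_inl_inl_at_inl :
    ((m : ℂ) - n) * b.repr (D (b (inl (n + m)))) (inl (n + m)) =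
      (m - n) * (b.repr (D (b (inl n))) (inl n) + b.repr (D (b (inl m))) (inl m)) := by
  have h := congrArg (fun z => b.repr z (inl (n + m))) (D.apply_lie_eq_add (b (inl n)) (b (inl m)))
  simp only [hb.lie_inl_inl, map_smul, Finsupp.smul_apply, smul_eq_mul, map_add,
    Finsupp.add_apply] at h
  rw [← lie_skew (b (inl n)), map_neg, Finsupp.neg_apply, hb.repr_lie_inl_inl,
    hb.repr_lie_inl_inl] at h
  simp only [add_sub_cancel_left, add_sub_cancel_right] at h
  push_cast at h
  linear_combination h

theorem leibniz_inl_inl_at_inr :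
    ((m : ℂ) - n) * b.repr (D (b (inl (n + m)))) (inr (n + m)) =
      ((n + m : ℂ) + if m = 0 then lamTerm lam n else 0) * b.repr (D (b (inl m))) (inr m) -
      ((n + m : ℂ) + if n = 0 then lamTerm lam m else 0) * b.repr (D (b (inl n))) (inr n) := by
  have h := congrArg (fun z => b.repr z (inr (n + m))) (D.apply_lie_eq_add (b (inl n)) (b (inl m)))
  simp only [hb.lie_inl_inl, map_smul, Finsupp.smul_apply, smul_eq_mul, map_add,
    Finsupp.add_apply] at h
  rw [← lie_skew (b (inl n)), map_neg, Finsupp.neg_apply, hb.repr_lie_inl_inr,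
    hb.repr_lie_inl_inr] at h
  simp only [add_sub_cancel_left, add_sub_cancel_right, add_eq_left, add_eq_right] at h
  push_cast at h
  linear_combination h

theorem leibniz_inl_inr_at_inl :
    ((n + m : ℂ) + if m = 0 then lamTerm lam n else 0) *
        b.repr (D (b (inr (n + m)))) (inl (n + m)) =
      (m - n) * b.repr (D (b (inr m))) (inl m) := by
  have h := congrArg (fun z => b.repr z (inl (n + m))) (D.apply_lie_eq_add (b (inl n)) (b (inr m)))
  simp only [hb.lie_inl_inr, map_smul, Finsupp.smul_apply, smul_eq_mul, map_add,
    Finsupp.add_apply] at h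
  rw [← lie_skew (b (inl n)), map_neg, Finsupp.neg_apply, hb.repr_lie_inl_inl,
    hb.repr_lie_inr_inl] at h
  simp only [add_sub_cancel_left] at h
  push_cast at h
  linear_combination h

theorem leibniz_inl_inr_at_inr :
    ((n + m : ℂ) + if m = 0 then lamTerm lam n else 0) *
        b.repr (D (b (inr (n + m)))) (inr (n + m)) =
      ((n + m : ℂ) + if m = 0 then lamTerm lam n else 0) *
        (b.repr (D (b (inl n))) (inl n) + b.repr (D (b (inr m))) (inr m)) := by
  have h := congrArg (fun z => b.repr z (inr (n + m))) (D.apply_lie_eq_add (b (inl n)) (b (inr m)))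
  simp only [hb.lie_inl_inr, map_smul, Finsupp.smul_apply, smul_eq_mul, map_add,
    Finsupp.add_apply] at h
  rw [← lie_skew (b (inl n)), map_neg, Finsupp.neg_apply, hb.repr_lie_inl_inr,
    hb.repr_lie_inr_inr] at h
  simp only [add_sub_cancel_left, add_sub_cancel_right, add_eq_left] at h
  push_cast at h
  linear_combination h

end Leibniz

section Derivation

variable (D : LieDerivation ℂ L L)

theorem repr_apply_inl_zero_inl_zero : b.repr (D (b (inl 0))) (inl 0) = 0 := by
  simpa using hb.leibniz_inl_inl_at_inl D 0 1

theorem repr_apply_inl_zero_inr_zero : b.repr (D (b (inl 0))) (inr 0) = 0 := by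
  obtain ⟨k, hk, hk'⟩ := exists_ne_zero_add_lamTerm_ne_zero lam
  have h := hb.leibniz_inl_inl_at_inr D 0 k
  simp only [zero_add, Int.cast_zero, sub_zero, if_true, if_neg hk, add_zero] at h
  exact (mul_eq_zero.mp (by linear_combination h)).resolve_left hk'

theorem repr_apply_inl_inl (n : ℤ) :
    b.repr (D (b (inl n))) (inl n) = n * b.repr (D (b (inl 1))) (inl 1) := by
  refine eq_mul_of_add_eq_add_of_ne (fun n => b.repr (D (b (inl n))) (inl n))
    (fun n m hnm => mul_left_cancel₀ ?_ (hb.leibniz_inl_inl_at_inl D n m)) n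
  exact sub_ne_zero.mpr (by exact_mod_cast hnm.symm)

theorem repr_apply_inr_inl (n : ℤ) : b.repr (D (b (inr n))) (inl n) = 0 := by
  have hne : ∀ m : ℤ, m ≠ 0 → b.repr (D (b (inr m))) (inl m) = 0 := by
    intro m hm
    have h := hb.leibniz_inl_inr_at_inl D (-m) m
    simp only [neg_add_cancel, if_neg hm, Int.cast_neg, add_zero, zero_mul,
      sub_neg_eq_add] at h
    refine (mul_eq_zero.mp h.symm).resolve_left ?_
    rw [← two_mul]
    exact mul_ne_zero two_ne_zero (by exact_mod_cast hm)
  rcases eq_or_ne n 0 with rfl | hn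
  · simpa [hne 1 one_ne_zero] using hb.leibniz_inl_inr_at_inl D 1 0
  · exact hne n hn

theorem repr_apply_inr_inr (n : ℤ) :
    b.repr (D (b (inr n))) (inr n) =
      b.repr (D (b (inr 0))) (inr 0) + n * b.repr (D (b (inl 1))) (inl 1) := by
  set c := b.repr (D (b (inl 1))) (inl 1)
  have hconst : ∀ k m : ℤ, m ≠ 0 → k ≠ 0 →
      b.repr (D (b (inr k))) (inr k) - k * c = b.repr (D (b (inr m))) (inr m) - m * c := by
    intro k m hm hk
    have h := hb.leibniz_inl_inr_at_inr D (k - m) m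
    simp only [sub_add_cancel, if_neg hm, add_zero] at h
    rw [hb.repr_apply_inl_inl D (k - m)] at h
    rw [mul_left_cancel₀ (by push_cast; simpa using hk) h]
    push_cast
    ring
  obtain ⟨k, hk, hk'⟩ := exists_ne_zero_add_lamTerm_ne_zero lam
  have hk0 : b.repr (D (b (inr k))) (inr k) = b.repr (D (b (inr 0))) (inr 0) + k * c := by
    have h := hb.leibniz_inl_inr_at_inr D k 0
    simp only [add_zero, Int.cast_zero, if_true] at h
    rw [hb.repr_apply_inl_inl D k] at h
    rw [mul_left_cancel₀ hk' h]
    ring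
  rcases eq_or_ne n 0 with rfl | hn
  · simp
  · linear_combination hconst n k hk hn + hk0

theorem exists_repr_apply_inl_inr :
    ∃ t s : ℂ, ∀ n : ℤ,
      b.repr (D (b (inl n))) (inr n) = t * (n + lamTerm lam n) + s * outerCoeff lam n := by
  have hrec : ∀ n m : ℤ, ((m : ℂ) - n) * b.repr (D (b (inl (n + m)))) (inr (n + m)) =
      (n + m) * (b.repr (D (b (inl m))) (inr m) - b.repr (D (b (inl n))) (inr n)) := by
    intro n m
    rcases eq_or_ne n 0 with rfl | hn
    · simp [hb.repr_apply_inl_zero_inr_zero]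
    rcases eq_or_ne m 0 with rfl | hm
    · simp [hb.repr_apply_inl_zero_inr_zero]
    · simpa [hn, hm, mul_sub] using hb.leibniz_inl_inl_at_inr D n m
  obtain ⟨p, q, hpq⟩ :=
    exists_eq_mul_add_mul_sq_of_sub_mul_eq (fun n => b.repr (D (b (inl n))) (inr n)) hrec
  obtain ⟨t, s, hts⟩ := exists_eq_mul_add_lamTerm_add_outerCoeff lam p q
  exact ⟨t, s, fun n => (hpq n).trans (hts n)⟩

end Derivation

theorem repr_apply_eq_zero_of_degree_ne {E : LieDerivation ℂ L L} (hE : E (b (inl 0)) = 0)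
    {i j : ℤ ⊕ ℤ} (hij : degree j ≠ degree i) : b.repr (E (b i)) j = 0 := by
  -- `E` commutes with `ad L₀`, which acts on `b j` as multiplication by `degree j`
  have h := congrArg (fun z => b.repr z j) (E.apply_lie_eq_add (b (inl 0)) (b i))
  simp only [hE, zero_lie, add_zero, hb.lie_inl_zero, map_smul, Finsupp.smul_apply, smul_eq_mul,
    ← lie_skew (b (inl 0)), map_neg, Finsupp.neg_apply, hb.repr_lie_inl_zero, neg_mul,
    neg_neg] at h
  have : ((degree i : ℂ) - degree j) * b.repr (E (b i)) j = 0 := by linear_combination h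
  exact (mul_eq_zero.mp this).resolve_left (sub_ne_zero.mpr (by exact_mod_cast hij.symm))

variable {dAb dlam : LieDerivation ℂ L L}
  (hAb₁ : ∀ n : ℤ, dAb (b (inl n)) = 0) (hAb₂ : ∀ n : ℤ, dAb (b (inr n)) = b (inr n))
  (hlam₁ : ∀ n : ℤ, dlam (b (inl n)) = outerCoeff lam n • b (inr n))
  (hlam₂ : ∀ n : ℤ, dlam (b (inr n)) = 0)
include hAb₁ hAb₂ hlam₁ hlam₂

theorem exists_sub_mem_innerDerivations_of_apply_inl_zero {E : LieDerivation ℂ L L}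
    (hE : E (b (inl 0)) = 0) :
    ∃ a s : ℂ, E - (a • dAb + s • dlam) ∈ innerDerivations L := by
  obtain ⟨t, s, hts⟩ := hb.exists_repr_apply_inl_inr E
  set c := b.repr (E (b (inl 1))) (inl 1)
  have hdeg (i : ℤ ⊕ ℤ) := b.eq_smul_inl_add_smul_inr (E (b i)) (degree i) fun j hj =>
    hb.repr_apply_eq_zero_of_degree_ne hE hj
  refine ⟨b.repr (E (b (inr 0))) (inr 0), s,
    mem_innerDerivations_of_basis b (x := c • b (inl 0) - t • b (inr 0)) fun i => ?_⟩
  rcases i with n | n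
  · rw [LieDerivation.sub_apply, hdeg (inl n)]
    simp only [degree, elim_inl, id, LieDerivation.add_apply, LieDerivation.smul_apply, sub_lie,
      smul_lie, hb.lie_inl_zero, hb.lie_inr_inl, hAb₁, hlam₁, hb.repr_apply_inl_inl E n, hts n,
      Int.cast_zero, add_zero, if_true]
    module
  · rw [LieDerivation.sub_apply, hdeg (inr n)]
    simp only [degree, elim_inr, id, LieDerivation.add_apply, LieDerivation.smul_apply, sub_lie,
      smul_lie, hb.lie_inl_zero, hb.lie_inr_inr, hAb₂, hlam₂, hb.repr_apply_inr_inl E n,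
      hb.repr_apply_inr_inr E n]
    module

theorem exists_sub_mem_innerDerivations (D : LieDerivation ℂ L L) :
    ∃ a s : ℂ, D - (a • dAb + s • dlam) ∈ innerDerivations L := by
  obtain ⟨x, hx⟩ := hb.exists_lie_inl_zero_eq (D (b (inl 0))) fun j hj => by
    rcases j with k | k <;> obtain rfl : k = 0 := hj
    exacts [hb.repr_apply_inl_zero_inl_zero D, hb.repr_apply_inl_zero_inr_zero D]
  obtain ⟨a, s, h⟩ := hb.exists_sub_mem_innerDerivations_of_apply_inl_zero hAb₁ hAb₂ hlam₁ hlam₂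
    (E := D - LieDerivation.ad ℂ L x) (by simp [hx])
  refine ⟨a, s, ?_⟩
  convert add_mem h (ad_mem_innerDerivations x) using 1
  abel

theorem eq_zero_of_add_mem_innerDerivations {a c : ℂ}
    (h : a • dAb + c • dlam ∈ innerDerivations L) : a = 0 ∧ c = 0 := by
  obtain ⟨x, hx⟩ := h
  have ha := congrArg (fun z => b.repr z (inr 0)) (hx (b (inr 0)))
  simp [hAb₂, hlam₂, hb.repr_lie_inr_inr, lamTerm_zero] at ha
  refine ⟨ha, eq_zero_of_mul_add_lamTerm_eq lam (β := -b.repr x (inr 0)) fun m => ?_⟩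
  have hm := congrArg (fun z => b.repr z (inr m)) (hx (b (inl m)))
  simp [hAb₁, hlam₁, hb.repr_lie_inl_inr] at hm
  linear_combination -hm

end IsWABasis

end WA

/-- `Der(W_A(λ)) = Inn(W_A(λ)) ⊕ ℂ·d_Ab ⊕ ℂ·d_λ^A`, an internal direct sum;
consequently the space of outer derivations is two-dimensional. -/
theorem stmt_18 (lam : Option ℂ) (L : Type) [LieRing L] [LieAlgebra ℂ L]
    (b : Module.Basis (ℤ ⊕ ℤ) ℂ L)
    (hLL : ∀ n m : ℤ,
      ⁅b (Sum.inl n), b (Sum.inl m)⁆ = ((m : ℂ) - (n : ℂ)) • b (Sum.inl (n + m)))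
    (hLA : ∀ n m : ℤ,
      ⁅b (Sum.inl n), b (Sum.inr m)⁆ =
        ((n : ℂ) + (m : ℂ) + (if m = 0 then lamTerm lam n else 0)) • b (Sum.inr (n + m)))
    (hAA : ∀ n m : ℤ, ⁅b (Sum.inr n), b (Sum.inr m)⁆ = 0)
    (dAb dlam : LieDerivation ℂ L L)
    (hAb1 : ∀ n : ℤ, dAb (b (Sum.inl n)) = 0)
    (hAb2 : ∀ n : ℤ, dAb (b (Sum.inr n)) = b (Sum.inr n))
    (hdlam1 : ∀ n : ℤ, dlam (b (Sum.inl n)) =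
      (if lam = some 0 then ((n : ℂ)) ^ 2 else (n : ℂ)) • b (Sum.inr n))
    (hdlam2 : ∀ n : ℤ, dlam (b (Sum.inr n)) = 0) :
    DirectSum.IsInternal
      ![innerDerivations L, Submodule.span ℂ {dAb}, Submodule.span ℂ {dlam}] ∧
    Module.finrank ℂ (LieDerivation ℂ L L ⧸ innerDerivations L) = 2 := by
  have hb : IsWABasis lam b := ⟨hLL, hLA, hAA⟩
  have hspan := hb.exists_sub_mem_innerDerivations hAb1 hAb2 hdlam1 hdlam2
  have hind : ∀ a c : ℂ, a • dAb + c • dlam ∈ innerDerivations L → a = 0 ∧ c = 0 :=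
    fun _ _ => hb.eq_zero_of_add_mem_innerDerivations hAb1 hAb2 hdlam1 hdlam2
  exact ⟨isInternal_of_basis_mod hspan hind,
    finrank_quotient_eq_two_of_basis_mod hspan hind⟩
end

section
/- Let λ ∈ (ℂ ∪ {∞}) \ {0}. Define derivations d_Ab and d_λ^B of W_B(λ) by: d_Ab(L_n) = 0, d_Ab(B_n) = B_n for all n; and d_λ^B(B_n) = 0 for all n, with d_λ^B(L_n) = B_n for n ≠ 0 and d_λ^B(L_0) = (λ+1)·B_0 when λ ∈ ℂ \ {0}, while d_∞^B(L_n) = B_n for all n when λ = ∞. Then the space of derivations of W_B(λ) is the internal direct sum Der(W_B(λ)) = Inn(W_B(λ)) ⊕ ℂ·d_Ab ⊕ ℂ·d_λ^B, where Inn(W_B(λ)) denotes the space of inner derivations ad_x, x ∈ W_B(λ). Consequently, the quotient Der(W_B(λ))/Inn(W_B(λ)) is two-dimensional. -/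
open Module Submodule Sum

section Complement

variable {K V : Type*} [DivisionRing K] [AddCommGroup V] [Module K V] {S : Submodule K V} {v w : V}

theorem Submodule.isInternal_of_sup_span_eq_top (hspan : S ⊔ K ∙ v ⊔ K ∙ w = ⊤)
    (hind : ∀ s t : K, s • v + t • w ∈ S → s = 0 ∧ t = 0) :
    DirectSum.IsInternal ![S, K ∙ v, K ∙ w] := by
  refine DirectSum.isInternal_submodule_of_iSupIndep_of_iSup_eq_top ?_ (by simpa using hspan)
  simp only [iSupIndep_fin_three, Matrix.cons_val_zero, Matrix.cons_val_one, Matrix.cons_val_two,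
    Matrix.head_cons, Matrix.tail_cons, disjoint_def, mem_sup, mem_span_singleton]
  refine ⟨?_, ?_, ?_⟩
  · rintro x hx ⟨_, ⟨s, rfl⟩, _, ⟨t, rfl⟩, rfl⟩
    obtain ⟨rfl, rfl⟩ := hind s t hx
    simp
  · rintro _ ⟨s, rfl⟩ ⟨_, ⟨t, rfl⟩, y, hy, h⟩
    obtain ⟨rfl, -⟩ := hind s (-t) (by convert hy using 1; rw [neg_smul, ← h]; abel)
    simp
  · rintro _ ⟨t, rfl⟩ ⟨y, hy, _, ⟨s, rfl⟩, h⟩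
    obtain ⟨-, rfl⟩ := hind (-s) t (by convert hy using 1; rw [neg_smul, ← h]; abel)
    simp

theorem Submodule.finrank_quotient_eq_two (hspan : S ⊔ K ∙ v ⊔ K ∙ w = ⊤)
    (hind : ∀ s t : K, s • v + t • w ∈ S → s = 0 ∧ t = 0) :
    finrank K (V ⧸ S) = 2 := by
  have hli : LinearIndependent K ![S.mkQ v, S.mkQ w] :=
    LinearIndependent.pair_iff.2 fun s t hst ↦
      hind s t <| (Quotient.mk_eq_zero S).1 <| by simpa using hst
  have hsp : ⊤ ≤ span K (Set.range ![S.mkQ v, S.mkQ w]) := by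
    rw [top_le_iff, Matrix.range_cons_cons_empty, ← Set.image_pair, ← map_span, map_mkQ_eq_top,
      span_insert, ← sup_assoc, hspan]
  simp [finrank_eq_card_basis (Basis.mk hli hsp)]

end Complement

theorem Module.Basis.eq_smul_add_smul_of_repr_eq_zero {ι R M : Type*} [Semiring R]
    [AddCommMonoid M] [Module R M] (b : Basis ι R M) {i j : ι} (hij : i ≠ j) {v : M}
    (hv : ∀ k, k ≠ i → k ≠ j → b.repr v k = 0) : v = b.repr v i • b i + b.repr v j • b j := by
  classical
  refine b.repr.injective (Finsupp.ext fun k ↦ ?_)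
  by_cases hi : k = i
  · subst hi; simp [hij.symm]
  by_cases hj : k = j
  · subst hj; simp [hij]
  simp [hv k hi hj, Ne.symm hi, Ne.symm hj]

theorem Module.Basis.eq_zero_of_smul_add_smul_eq_zero {ι R M : Type*} [Ring R] [AddCommGroup M]
    [Module R M] (b : Basis ι R M) {i j : ι} (hij : i ≠ j) {α β : R}
    (h : α • b i + β • b j = 0) : α = 0 ∧ β = 0 := by
  classical
  exact ⟨by simpa [Finsupp.single_apply, hij.symm] using congrArg (b.repr · i) h,
    by simpa [Finsupp.single_apply, hij] using congrArg (b.repr · j) h⟩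

theorem LieDerivation.ext_basis {ι R L M : Type*} [CommRing R] [LieRing L] [LieAlgebra R L]
    [AddCommGroup M] [Module R M] [LieRingModule L M] [LieModule R L M] (b : Basis ι R L)
    {D₁ D₂ : LieDerivation R L M} (h : ∀ i, D₁ (b i) = D₂ (b i)) : D₁ = D₂ :=
  LieDerivation.ext fun y ↦
    LinearMap.congr_fun (b.ext (f₁ := (D₁ : L →ₗ[R] M)) (f₂ := D₂) h) y

namespace WB

def bracketCoeff (lam : Option ℂ) (n m : ℤ) : ℂ := m - if n + m = 0 then lamTerm lam n else 0

def dlamCoeff (lam : Option ℂ) (n : ℤ) : ℂ := lam.elim 1 fun l ↦ if n = 0 then l + 1 else 1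

def weight : ℤ ⊕ ℤ → ℤ := Sum.elim id id

@[simp] theorem weight_inl (n : ℤ) : weight (inl n) = n := rfl

@[simp] theorem weight_inr (n : ℤ) : weight (inr n) = n := rfl

theorem weight_ne_of_ne {n : ℤ} {i : ℤ ⊕ ℤ} (hl : i ≠ inl n) (hr : i ≠ inr n) : weight i ≠ n := by
  rcases i with m | m <;> simp_all

@[simp] theorem lamTerm_zero (lam : Option ℂ) : lamTerm lam 0 = 0 := by
  cases lam <;> simp [lamTerm]

@[simp] theorem bracketCoeff_zero_left (lam : Option ℂ) (m : ℤ) : bracketCoeff lam 0 m = m := by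
  rcases eq_or_ne m 0 with rfl | hm <;> simp [bracketCoeff, *]

@[simp] theorem bracketCoeff_zero_right (lam : Option ℂ) (n : ℤ) : bracketCoeff lam n 0 = 0 := by
  rcases eq_or_ne n 0 with rfl | hn <;> simp [bracketCoeff, *]

theorem bracketCoeff_of_add_ne_zero (lam : Option ℂ) {n m : ℤ} (h : n + m ≠ 0) :
    bracketCoeff lam n m = m := by
  simp [bracketCoeff, h]

@[simp] theorem dlamCoeff_of_ne_zero (lam : Option ℂ) {n : ℤ} (h : n ≠ 0) :
    dlamCoeff lam n = 1 := by
  cases lam <;> simp [dlamCoeff, h]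

theorem lamTerm_one_add_lamTerm_neg_one_ne_zero {lam : Option ℂ} (hlam : lam ≠ some 0) :
    lamTerm lam 1 + lamTerm lam (-1) ≠ 0 := by
  rcases lam with _ | l
  · norm_num [lamTerm]
  · have hl : l ≠ 0 := fun h ↦ hlam (by rw [h])
    norm_num [lamTerm, hl]

theorem exists_bracketCoeff_neg_ne_zero (lam : Option ℂ) : ∃ n, bracketCoeff lam n (-n) ≠ 0 := by
  rcases lam with _ | l
  · exact ⟨1, by norm_num [bracketCoeff, lamTerm]⟩
  · exact ⟨-1, by norm_num [bracketCoeff, lamTerm]⟩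

theorem eq_intCast_mul_of_add_of_ne {c : ℤ → ℂ} (hc : ∀ n m, n ≠ m → c (n + m) = c n + c m)
    (n : ℤ) : c n = n * c 1 := by
  have h0 : c 0 = 0 := by simpa using hc 0 1
  have hm1 : c (-1) = -c 1 := by
    have h := hc 1 (-1) (by norm_num)
    norm_num [h0] at h
    linear_combination -h
  -- `(1, 1)` is excluded, so `c 2` is reached through `c 4` and `c 5`
  have h2 : c 2 = 2 * c 1 := by
    have h13 := hc 1 3
    have h23 := hc 2 3
    have h15 := hc (-1) 5
    norm_num [hm1] at h13 h23 h15
    linear_combination h13 - h15 - h23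
  induction n using Int.induction_on with
  | zero => simpa using h0
  | succ k ih =>
    rcases eq_or_ne (k : ℤ) 1 with hk | hk
    · rw [hk]
      norm_num [h2]
    · push_cast
      linear_combination hc k 1 hk + ih
  | pred k ih =>
    push_cast at ih
    rcases eq_or_ne (k : ℤ) 1 with hk | hk
    · rw [hk]
      have h := hc 2 (-2) (by norm_num)
      norm_num [h0, h2] at h
      norm_num
      linear_combination -h
    · have h := hc (-k) (-1) (by omega)
      rw [← sub_eq_add_neg] at h
      push_cast
      linear_combination h + ih + hm1

theorem eq_add_mul_of_bracketCoeff_mul (lam : Option ℂ) {f : ℤ → ℂ} {a : ℂ}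
    (hf : ∀ n m, bracketCoeff lam n m * f (n + m) = bracketCoeff lam n m * (n * a + f m))
    (n : ℤ) : f n = f 1 + (n - 1) * a := by
  have hne (n : ℤ) (hn : n ≠ 0) : f n = f 1 + (n - 1) * a := by
    have h := hf (n - 1) 1
    rw [bracketCoeff_of_add_ne_zero lam (by omega), sub_add_cancel] at h
    push_cast at h
    linear_combination h
  rcases eq_or_ne n 0 with rfl | hn
  · obtain ⟨k, hk⟩ := exists_bracketCoeff_neg_ne_zero lam
    have hk0 : k ≠ 0 := by rintro rfl; simp at hk
    have h := mul_left_cancel₀ hk (hf k (-k))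
    rw [add_neg_cancel, hne (-k) (neg_ne_zero.2 hk0)] at h
    push_cast at h ⊢
    linear_combination h
  · exact hne n hn

theorem eq_zero_of_mul_bracketCoeff_comm {lam : Option ℂ} (hlam : lam ≠ some 0) {e : ℤ → ℂ}
    (he : ∀ n m, e n * bracketCoeff lam n m = e m * bracketCoeff lam m n) (n : ℤ) : e n = 0 := by
  have h2 : e 2 = 2 * e 1 := by
    have h := he 2 1
    norm_num [bracketCoeff_of_add_ne_zero] at h
    linear_combination h
  have hlin (n : ℤ) : e n = n * e 1 := by
    rcases eq_or_ne n (-1) with rfl | hn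
    · have h := he (-1) 2
      norm_num [bracketCoeff_of_add_ne_zero] at h
      linear_combination h / 2 - h2 / 2
    · have h := he n 1
      rw [bracketCoeff_of_add_ne_zero lam (by omega), bracketCoeff_of_add_ne_zero lam (by omega)]
        at h
      push_cast at h
      linear_combination h
  have h1 : e 1 * (lamTerm lam 1 + lamTerm lam (-1)) = 0 := by
    have h := he 1 (-1)
    simp only [bracketCoeff, hlin (-1)] at h
    norm_num at h
    linear_combination -h
  rw [hlin n, (mul_eq_zero.1 h1).resolve_right (lamTerm_one_add_lamTerm_neg_one_ne_zero hlam),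
    mul_zero]

theorem eq_add_mul_of_witt {d : ℤ → ℂ}
    (hd : ∀ n m : ℤ, n + m ≠ 0 → ((m : ℂ) - n) * d (n + m) = m * d m - n * d n) {n : ℤ}
    (hn : n ≠ 0) : d n = d 1 + (n - 1) * (d 2 - d 1) := by
  have hpos (k : ℕ) : d (k + 1) = d 1 + k * (d 2 - d 1) := by
    induction k with
    | zero => simp
    | succ k ih =>
      rcases Nat.eq_zero_or_pos k with rfl | hk
      · norm_num
      · have h := hd 1 (k + 1) (by omega)
        rw [show (1 : ℤ) + (k + 1) = (k + 1 : ℕ) + 1 by push_cast; ring] at h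
        apply mul_left_cancel₀ (show (k : ℂ) ≠ 0 by exact_mod_cast hk.ne')
        push_cast at h ⊢
        linear_combination h + (k + 1) * ih
  have hneg (k : ℕ) : d (-k - 1) = d 1 + (-k - 2) * (d 2 - d 1) := by
    induction k with
    | zero =>
      have h := hd 3 (-1) (by norm_num)
      have h3 := hpos 2
      norm_num at h h3 ⊢
      linear_combination h - 3 * h3
    | succ k ih =>
      have h := hd (-k - 2) 1 (by omega)
      rw [show -(k : ℤ) - 2 + 1 = -k - 1 by ring] at h
      rw [show -((k + 1 : ℕ) : ℤ) - 1 = -k - 2 by push_cast; ring]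
      apply mul_left_cancel₀ (show (k : ℂ) + 2 ≠ 0 by norm_cast)
      push_cast at h ⊢
      linear_combination -h + (k + 3) * ih
  rcases lt_or_gt_of_ne hn with h | h
  · obtain ⟨k, rfl⟩ : ∃ k : ℕ, n = -k - 1 := ⟨(-n - 1).toNat, by omega⟩
    rw [hneg k]
    push_cast
    ring
  · obtain ⟨k, rfl⟩ : ∃ k : ℕ, n = k + 1 := ⟨(n - 1).toNat, by omega⟩
    rw [hpos k]
    push_cast
    ring

theorem eq_mul_dlamCoeff {lam : Option ℂ} (hlam : lam ≠ some 0) {d : ℤ → ℂ}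
    (hd : ∀ n m : ℤ, ((m : ℂ) - n) * d (n + m) =
      d m * bracketCoeff lam n m - d n * bracketCoeff lam m n) (n : ℤ) :
    d n = d 1 * dlamCoeff lam n := by
  have haff {k : ℤ} (hk : k ≠ 0) : d k = d 1 + (k - 1) * (d 2 - d 1) := by
    refine eq_add_mul_of_witt (fun n m h ↦ ?_) hk
    have := hd n m
    rw [bracketCoeff_of_add_ne_zero lam h, bracketCoeff_of_add_ne_zero lam (by omega)] at this
    linear_combination this
  -- the relations at `(1, -1)` and `(2, -2)` kill the slope of `d` and fix `d 0`
  have e1 := hd 1 (-1)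
  have e2 := hd 2 (-2)
  rw [haff (by norm_num : (-1 : ℤ) ≠ 0)] at e1
  rw [haff (by norm_num : (-2 : ℤ) ≠ 0)] at e2
  have key : d 2 = d 1 ∧ d 0 = d 1 * dlamCoeff lam 0 := by
    rcases lam with _ | l
    · norm_num [bracketCoeff, lamTerm] at e1 e2
      have hv : d 2 = d 1 := by linear_combination -e1 / 6 - e2 / 12
      refine ⟨hv, ?_⟩
      simp only [dlamCoeff, Option.elim, mul_one]
      linear_combination e1 / 2 - 2 * hv
    · have hl : l ≠ 0 := fun h ↦ hlam (by rw [h])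
      norm_num [bracketCoeff, lamTerm] at e1 e2
      have hv : d 2 = d 1 := by
        have : (d 2 - d 1) * l = 0 := by linear_combination -e2 / 12 + e1 / 6
        linear_combination (mul_eq_zero.1 this).resolve_right hl
      refine ⟨hv, ?_⟩
      simp only [dlamCoeff, Option.elim, if_pos]
      linear_combination -e1 / 2 - (1 + 2 * l) * hv
  rcases eq_or_ne n 0 with rfl | hn
  · exact key.2
  · rw [haff hn, key.1, dlamCoeff_of_ne_zero lam hn]
    ring

/-- `b (inl n)` is `L_n` and `b (inr n)` is `B_n`. -/
structure IsStandardBasis {L : Type*} [LieRing L] [LieAlgebra ℂ L] (lam : Option ℂ)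
    (b : Basis (ℤ ⊕ ℤ) ℂ L) : Prop where
  lie_inl_inl (n m : ℤ) : ⁅b (inl n), b (inl m)⁆ = ((m : ℂ) - n) • b (inl (n + m))
  lie_inl_inr (n m : ℤ) : ⁅b (inl n), b (inr m)⁆ = bracketCoeff lam n m • b (inr (n + m))
  lie_inr_inr (n m : ℤ) : ⁅b (inr n), b (inr m)⁆ = 0

namespace IsStandardBasis

variable {L : Type*} [LieRing L] [LieAlgebra ℂ L] {lam : Option ℂ} {b : Basis (ℤ ⊕ ℤ) ℂ L}
  (hb : IsStandardBasis lam b)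
include hb

theorem lie_inr_inl (n m : ℤ) :
    ⁅b (inr n), b (inl m)⁆ = -(bracketCoeff lam m n • b (inr (n + m))) := by
  rw [← lie_skew, hb.lie_inl_inr, add_comm]

theorem lie_inl_zero (i : ℤ ⊕ ℤ) : ⁅b (inl 0), b i⁆ = (weight i : ℂ) • b i := by
  rcases i with m | m <;> simp [hb.lie_inl_inl, hb.lie_inl_inr]

theorem lie_inr_zero (y : L) : ⁅b (inr 0), y⁆ = 0 := by
  have : LieAlgebra.ad ℂ L (b (inr 0)) = 0 := b.ext fun i ↦ by
    rcases i with m | m <;> simp [hb.lie_inr_inl, hb.lie_inr_inr]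
  simpa using LinearMap.congr_fun this y

theorem repr_lie_inl_zero (v : L) (i : ℤ ⊕ ℤ) :
    b.repr ⁅b (inl 0), v⁆ i = weight i * b.repr v i := by
  have : b.coord i ∘ₗ LieAlgebra.ad ℂ L (b (inl 0)) = (weight i : ℂ) • b.coord i := b.ext fun j ↦ by
    classical
    simp only [LinearMap.comp_apply, LieAlgebra.ad_apply, hb.lie_inl_zero, map_smul,
      Basis.coord_apply, Basis.repr_self, LinearMap.smul_apply, Finsupp.single_apply]
    split_ifs with h <;> simp [h]
  simpa using LinearMap.congr_fun this v

theorem eq_of_lie_inl_zero_eq_smul {v : L} {n : ℤ} (hv : ⁅b (inl 0), v⁆ = (n : ℂ) • v) :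
    v = b.repr v (inl n) • b (inl n) + b.repr v (inr n) • b (inr n) := by
  refine b.eq_smul_add_smul_of_repr_eq_zero inl_ne_inr fun k hl hr ↦ ?_
  have hk : ((weight k : ℂ) - n) * b.repr v k = 0 := by
    have := congrArg (b.repr · k) hv
    simp only [hb.repr_lie_inl_zero, map_smul, Finsupp.smul_apply, smul_eq_mul] at this
    linear_combination this
  exact (mul_eq_zero.1 hk).resolve_left (sub_ne_zero.2 (by exact_mod_cast weight_ne_of_ne hl hr))

theorem lie_inl_zero_eq_zero_of_lie_lie {v : L} (hv : ⁅b (inl 0), ⁅b (inl 0), v⁆⁆ = 0) :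
    ⁅b (inl 0), v⁆ = 0 := by
  refine b.repr.injective (Finsupp.ext fun i ↦ ?_)
  simpa [hb.repr_lie_inl_zero] using congrArg (b.repr · i) hv

theorem exists_lie_inl_zero_add_lie_eq_zero (v : L) :
    ∃ x : L, ⁅b (inl 0), v + ⁅x, b (inl 0)⁆⁆ = 0 := by
  set r := b.repr v
  have hfin : (Function.support fun i ↦ r i / weight i).Finite :=
    Set.Finite.subset r.hasFiniteSupport fun i hi ↦ by simp_all
  -- at weight `0` this is `r i / 0 = 0`, which is harmless: `ad L₀` kills that coordinate anyway
  let x := b.repr.symm (Finsupp.ofSupportFinite _ hfin)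
  have hx (i : ℤ ⊕ ℤ) : b.repr x i = r i / weight i := by simp [x, Finsupp.ofSupportFinite_coe]
  refine ⟨x, b.repr.injective (Finsupp.ext fun i ↦ ?_)⟩
  rw [← lie_skew x, ← sub_eq_add_neg]
  simp only [map_sub, Finsupp.sub_apply, hb.repr_lie_inl_zero, hx, map_zero, Finsupp.coe_zero,
    Pi.zero_apply]
  rcases eq_or_ne (weight i : ℂ) 0 with h | h
  · simp [h]
  · field_simp
    ring

variable (D : LieDerivation ℂ L L)

theorem apply_inl_zero_eq_smul (hD : ⁅b (inl 0), D (b (inl 0))⁆ = 0) :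
    D (b (inl 0)) = b.repr (D (b (inl 0))) (inr 0) • b (inr 0) := by
  set c := b.repr (D (b (inl 0))) (inl 0)
  have h0 : D (b (inl 0)) = c • b (inl 0) + _ := hb.eq_of_lie_inl_zero_eq_smul (by simpa using hD)
  have h1 := D.apply_lie_eq_add (b (inl 0)) (b (inl 1))
  rw [h0, add_lie, smul_lie, smul_lie, hb.lie_inr_zero, smul_zero, add_zero, hb.lie_inl_zero] at h1
  have hc : c = 0 := by simpa [hb.repr_lie_inl_zero] using congrArg (b.repr · (inl 1)) h1
  rwa [hc, zero_smul, zero_add] at h0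

theorem apply_lie_inl_zero (hD : ⁅b (inl 0), D (b (inl 0))⁆ = 0) (y : L) :
    D ⁅b (inl 0), y⁆ = ⁅b (inl 0), D y⁆ := by
  rw [D.apply_lie_eq_add, hb.apply_inl_zero_eq_smul D hD, smul_lie, hb.lie_inr_zero, smul_zero,
    add_zero]

theorem apply_eq_smul_add_smul (hD : ⁅b (inl 0), D (b (inl 0))⁆ = 0) (i : ℤ ⊕ ℤ) :
    D (b i) = b.repr (D (b i)) (inl (weight i)) • b (inl (weight i)) +
      b.repr (D (b i)) (inr (weight i)) • b (inr (weight i)) :=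
  hb.eq_of_lie_inl_zero_eq_smul <| by
    rw [← hb.apply_lie_inl_zero D hD, hb.lie_inl_zero, map_smul]

variable {D} {c d e f : ℤ → ℂ}

theorem coeff_of_lie_inr_inr (hB : ∀ n, D (b (inr n)) = e n • b (inl n) + f n • b (inr n))
    (n m : ℤ) : e n * bracketCoeff lam n m = e m * bracketCoeff lam m n := by
  have h := D.apply_lie_eq_add (b (inr n)) (b (inr m))
  simp only [hb.lie_inr_inr, map_zero, hB, lie_add, add_lie, lie_smul, smul_lie, hb.lie_inl_inr,
    hb.lie_inr_inl, smul_zero, add_zero] at h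
  have hv : (e n * bracketCoeff lam n m - e m * bracketCoeff lam m n) • b (inr (n + m)) = 0 := by
    linear_combination (norm := module) -h
  exact sub_eq_zero.1 ((smul_eq_zero.1 hv).resolve_right (b.ne_zero _))

theorem coeff_of_lie_inl_inl (hL : ∀ n, D (b (inl n)) = c n • b (inl n) + d n • b (inr n))
    (n m : ℤ) : ((m : ℂ) - n) * c (n + m) = ((m : ℂ) - n) * (c n + c m) ∧
      ((m : ℂ) - n) * d (n + m) = d m * bracketCoeff lam n m - d n * bracketCoeff lam m n := by
  have h := D.apply_lie_eq_add (b (inl n)) (b (inl m))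
  simp only [hb.lie_inl_inl, map_smul, hL, lie_add, add_lie, lie_smul, smul_lie, hb.lie_inl_inr,
    hb.lie_inr_inl] at h
  have := b.eq_zero_of_smul_add_smul_eq_zero inl_ne_inr
    (α := ((m : ℂ) - n) * c (n + m) - ((m : ℂ) - n) * (c n + c m))
    (β := ((m : ℂ) - n) * d (n + m) - (d m * bracketCoeff lam n m - d n * bracketCoeff lam m n))
    (by linear_combination (norm := module) h)
  exact ⟨sub_eq_zero.1 this.1, sub_eq_zero.1 this.2⟩

theorem coeff_of_lie_inl_inr (hL : ∀ n, D (b (inl n)) = c n • b (inl n) + d n • b (inr n))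
    (hB : ∀ n, D (b (inr n)) = e n • b (inl n) + f n • b (inr n)) (n m : ℤ) :
    bracketCoeff lam n m * f (n + m) = bracketCoeff lam n m * (c n + f m) := by
  have h := D.apply_lie_eq_add (b (inl n)) (b (inr m))
  simp only [hb.lie_inl_inr, map_smul, hL, hB, lie_add, add_lie, lie_smul, smul_lie,
    hb.lie_inl_inl, hb.lie_inr_inr, smul_zero, add_zero] at h
  have := b.eq_zero_of_smul_add_smul_eq_zero inl_ne_inr
    (α := bracketCoeff lam n m * e (n + m) - ((m : ℂ) - n) * e m)
    (β := bracketCoeff lam n m * f (n + m) - bracketCoeff lam n m * (c n + f m))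
    (by linear_combination (norm := module) h)
  exact sub_eq_zero.1 this.2

section Outer

variable {dAb dlam : LieDerivation ℂ L L}
  (hAb1 : ∀ n : ℤ, dAb (b (inl n)) = 0) (hAb2 : ∀ n : ℤ, dAb (b (inr n)) = b (inr n))
  (hdlam1 : ∀ n : ℤ, dlam (b (inl n)) = dlamCoeff lam n • b (inr n))
  (hdlam2 : ∀ n : ℤ, dlam (b (inr n)) = 0)
include hAb1 hAb2 hdlam1 hdlam2

theorem exists_eq_ad_add_smul_add_smul_of_lie_apply (hlam : lam ≠ some 0)
    (hD : ⁅b (inl 0), D (b (inl 0))⁆ = 0) :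
    ∃ (x : L) (a u : ℂ), D = LieDerivation.ad ℂ L x + a • dAb + u • dlam := by
  set c : ℤ → ℂ := fun n ↦ b.repr (D (b (inl n))) (inl n)
  set d : ℤ → ℂ := fun n ↦ b.repr (D (b (inl n))) (inr n)
  set e : ℤ → ℂ := fun n ↦ b.repr (D (b (inr n))) (inl n)
  set f : ℤ → ℂ := fun n ↦ b.repr (D (b (inr n))) (inr n)
  have hL (n : ℤ) : D (b (inl n)) = c n • b (inl n) + d n • b (inr n) :=
    hb.apply_eq_smul_add_smul D hD (inl n)
  have hB (n : ℤ) : D (b (inr n)) = e n • b (inl n) + f n • b (inr n) :=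
    hb.apply_eq_smul_add_smul D hD (inr n)
  have he := eq_zero_of_mul_bracketCoeff_comm hlam (hb.coeff_of_lie_inr_inr hB)
  have hc := eq_intCast_mul_of_add_of_ne fun n m hnm ↦
    mul_left_cancel₀ (sub_ne_zero.2 (by exact_mod_cast hnm.symm)) (hb.coeff_of_lie_inl_inl hL n m).1
  have hf := eq_add_mul_of_bracketCoeff_mul lam (a := c 1) fun n m ↦ by
    rw [hb.coeff_of_lie_inl_inr hL hB, hc]
  have hd := eq_mul_dlamCoeff hlam fun n m ↦ (hb.coeff_of_lie_inl_inl hL n m).2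
  refine ⟨c 1 • b (inl 0), f 1 - c 1, d 1, LieDerivation.ext_basis b fun i ↦ ?_⟩
  rcases i with n | n
  · rw [hL n, hc n, hd n]
    simp only [LieDerivation.add_apply, LieDerivation.smul_apply, LieDerivation.ad_apply_apply,
      smul_lie, hb.lie_inl_zero, weight_inl, hAb1, hdlam1]
    module
  · rw [hB n, he n, hf n]
    simp only [LieDerivation.add_apply, LieDerivation.smul_apply, LieDerivation.ad_apply_apply,
      smul_lie, hb.lie_inl_zero, weight_inr, hAb2, hdlam2]
    module

end Outer

end IsStandardBasis

theorem ad_mem_innerDerivations {L : Type} [LieRing L] [LieAlgebra ℂ L] (x : L) :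
    LieDerivation.ad ℂ L x ∈ innerDerivations L :=
  ⟨x, fun y ↦ LieDerivation.ad_apply_apply ℂ L x y⟩

namespace IsStandardBasis

variable {L : Type} [LieRing L] [LieAlgebra ℂ L] {lam : Option ℂ} {b : Basis (ℤ ⊕ ℤ) ℂ L}
  (hb : IsStandardBasis lam b) {dAb dlam : LieDerivation ℂ L L}
  (hAb1 : ∀ n : ℤ, dAb (b (inl n)) = 0) (hAb2 : ∀ n : ℤ, dAb (b (inr n)) = b (inr n))
  (hdlam1 : ∀ n : ℤ, dlam (b (inl n)) = dlamCoeff lam n • b (inr n))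
  (hdlam2 : ∀ n : ℤ, dlam (b (inr n)) = 0)
include hb hAb1 hAb2 hdlam1 hdlam2

theorem sup_span_eq_top (hlam : lam ≠ some 0) :
    innerDerivations L ⊔ ℂ ∙ dAb ⊔ ℂ ∙ dlam = ⊤ := by
  refine eq_top_iff.2 fun D _ ↦ ?_
  obtain ⟨x₀, hx₀⟩ := hb.exists_lie_inl_zero_add_lie_eq_zero (D (b (inl 0)))
  obtain ⟨x, a, u, hD⟩ := hb.exists_eq_ad_add_smul_add_smul_of_lie_apply hAb1 hAb2 hdlam1 hdlam2
    (D := D + LieDerivation.ad ℂ L x₀) hlam (by simpa using hx₀)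
  rw [show D = LieDerivation.ad ℂ L (x - x₀) + a • dAb + u • dlam by
    rw [map_sub, eq_sub_of_add_eq hD]; abel]
  exact add_mem (add_mem (mem_sup_left (mem_sup_left (ad_mem_innerDerivations _)))
    (mem_sup_left (mem_sup_right (smul_mem _ _ (mem_span_singleton_self _)))))
    (mem_sup_right (smul_mem _ _ (mem_span_singleton_self _)))

theorem eq_zero_of_smul_add_smul_mem_innerDerivations (s t : ℂ)
    (h : s • dAb + t • dlam ∈ innerDerivations L) : s = 0 ∧ t = 0 := by
  obtain ⟨x, hx⟩ := h
  simp only [LieDerivation.add_apply, LieDerivation.smul_apply] at hx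
  have hx0 : ⁅b (inl 0), x⁆ = 0 := hb.lie_inl_zero_eq_zero_of_lie_lie <| by
    rw [← lie_skew (b (inl 0)) x, ← hx, hAb1, hdlam1]
    simp [hb.lie_inl_inr]
  have hxL : x = b.repr x (inl 0) • b (inl 0) + b.repr x (inr 0) • b (inr 0) :=
    hb.eq_of_lie_inl_zero_eq_smul (n := 0) (by simpa using hx0)
  set α := b.repr x (inl 0)
  set β := b.repr x (inr 0)
  have h1 : t • b (inr 1) = α • b (inl 1) := by
    simpa [hAb1, hdlam1, hxL, hb.lie_inl_zero, hb.lie_inr_zero] using hx (b (inl 1))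
  have h2 : s • b (inr 1) = α • b (inr 1) := by
    simpa [hAb2, hdlam2, hxL, hb.lie_inl_zero, hb.lie_inr_zero] using hx (b (inr 1))
  obtain ⟨hα, ht⟩ := b.eq_zero_of_smul_add_smul_eq_zero (i := inl 1) (j := inr 1) inl_ne_inr
    (α := -α) (β := t) (by linear_combination (norm := module) h1)
  rw [neg_eq_zero.1 hα] at h2
  exact ⟨smul_left_injective ℂ (b.ne_zero _) h2, ht⟩

end IsStandardBasis
end WB

/-- for `λ ≠ 0`, `Der(W_B(λ)) = Inn(W_B(λ)) ⊕ ℂ·d_Ab ⊕ ℂ·d_λ^B`, an internal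
direct sum; consequently the space of outer derivations is two-dimensional. -/
theorem stmt_19 (lam : Option ℂ) (hlam : lam ≠ some 0)
    (L : Type) [LieRing L] [LieAlgebra ℂ L]
    (b : Module.Basis (ℤ ⊕ ℤ) ℂ L)
    (hLL : ∀ n m : ℤ,
      ⁅b (Sum.inl n), b (Sum.inl m)⁆ = ((m : ℂ) - (n : ℂ)) • b (Sum.inl (n + m)))
    (hLB : ∀ n m : ℤ,
      ⁅b (Sum.inl n), b (Sum.inr m)⁆ =
        ((m : ℂ) - (if n + m = 0 then lamTerm lam n else 0)) • b (Sum.inr (n + m)))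
    (hBB : ∀ n m : ℤ, ⁅b (Sum.inr n), b (Sum.inr m)⁆ = 0)
    (dAb dlam : LieDerivation ℂ L L)
    (hAb1 : ∀ n : ℤ, dAb (b (Sum.inl n)) = 0)
    (hAb2 : ∀ n : ℤ, dAb (b (Sum.inr n)) = b (Sum.inr n))
    (hdlam1 : ∀ n : ℤ, dlam (b (Sum.inl n)) =
      (lam.elim (1 : ℂ) fun l => if n = 0 then l + 1 else 1) • b (Sum.inr n))
    (hdlam2 : ∀ n : ℤ, dlam (b (Sum.inr n)) = 0) :
    DirectSum.IsInternal
      ![innerDerivations L, Submodule.span ℂ {dAb}, Submodule.span ℂ {dlam}] ∧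
    Module.finrank ℂ (LieDerivation ℂ L L ⧸ innerDerivations L) = 2 := by
  have hb : WB.IsStandardBasis lam b := ⟨hLL, hLB, hBB⟩
  have hspan := hb.sup_span_eq_top hAb1 hAb2 hdlam1 hdlam2 hlam
  have hind := hb.eq_zero_of_smul_add_smul_mem_innerDerivations hAb1 hAb2 hdlam1 hdlam2
  exact ⟨isInternal_of_sup_span_eq_top hspan hind, finrank_quotient_eq_two hspan hind⟩
end
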